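/- For every n ∈ ℕ, every s ∈ [0,1], and all z,w ∈ ℂ with sin((z − conj w)/2) ≠ 0, the kernels defined in the context satisfy K(n+s,z,w) = (sin((1−s)·(z−conj w)/2)/sin((z−conj w)/2))·K(n,z,w) + (sin(s·(z−conj w)/2)/sin((z−conj w)/2))·K(n+1,z,w), where K(n,z,w) and K(n+1,z,w) denote the values of the defining formula with parameters (n, s=0) and (n, s=1), respectively. -/

import Mathlib

open MeasureTheory Filter Topology Polynomial ComplexConjugate

noncomputable section

/-- `φ` is the sequence of orthonormal polynomials of the measure `ν` on the unit
circle. -/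
def IsOrthonormalPolysUC (ν : Measure ℂ) (φ : ℕ → Polynomial ℂ) : Prop :=
  (∀ n : ℕ, (φ n).degree = (n : WithBot ℕ)) ∧
    (∀ n, 0 < ((φ n).leadingCoeff).re ∧ ((φ n).leadingCoeff).im = 0) ∧
    ∀ m n, ∫ ζ, conj ((φ m).eval ζ) * (φ n).eval ζ ∂ν = if m = n then 1 else 0

/-- `ν` is supported on the unit circle. -/
def SupportedOnCircle (ν : Measure ℂ) : Prop := ν {z : ℂ | ‖z‖ ≠ 1} = 0

/-- The support of `ν` is an infinite set. -/
def HasInfiniteSupportC (ν : Measure ℂ) : Prop :=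
  ∀ s : Finset ℂ, ν ((↑s : Set ℂ)ᶜ) ≠ 0

/-- The reversed (`*`-)polynomial `q^*(ζ) = ζ^{deg q} conj (q (1/conj ζ))`. -/
def polyStar (q : Polynomial ℂ) : Polynomial ℂ := (q.map (starRingEnd ℂ)).reverse

/-- The Christoffel–Darboux kernel on the unit circle. -/
def kCD (φ : ℕ → Polynomial ℂ) (n : ℕ) (ζ ω : ℂ) : ℂ :=
  ∑ j ∈ Finset.range n, (φ j).eval ζ * conj ((φ j).eval ω)

/-- The diagonal CD kernel on the unit circle. -/
def kdiag (φ : ℕ → Polynomial ℂ) (n : ℕ) (ζ : ℂ) : ℝ :=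
  ∑ j ∈ Finset.range n, Complex.normSq ((φ j).eval ζ)

/-- Numerator of the canonical-system kernel associated to OPUC. -/
def opucNum (φ : ℕ → Polynomial ℂ) (n : ℕ) (s : ℝ) (w z : ℂ) : ℂ :=
  Complex.exp (-Complex.I * (n : ℂ) * (z - conj w) / 2) *
    (Complex.exp (-Complex.I * (s : ℂ) * (z - conj w) / 2) *
        (polyStar (φ n)).eval (Complex.exp (Complex.I * z)) *
        conj ((polyStar (φ n)).eval (Complex.exp (Complex.I * w))) -
      Complex.exp (Complex.I * (s : ℂ) * (z - conj w) / 2) *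
        (φ n).eval (Complex.exp (Complex.I * z)) *
        conj ((φ n).eval (Complex.exp (Complex.I * w))))

/-- The canonical-system kernel `K(n+s,z,w)` associated to OPUC, extended to the
diagonal `z = conj w` by continuity. -/
def opucK (φ : ℕ → Polynomial ℂ) (n : ℕ) (s : ℝ) (z w : ℂ) : ℂ :=
  if z = conj w then deriv (opucNum φ n s w) z / (2 * Complex.I)
  else opucNum φ n s w z / (2 * Complex.I * (z - conj w))

/-- The kernel `K(t,z,w)` with `t = ⌊t⌋ + s`. -/
def opucKT (φ : ℕ → Polynomial ℂ) (t : ℝ) (z w : ℂ) : ℂ :=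
  opucK φ ⌊t⌋₊ (t - ⌊t⌋₊) z w

/-- Auxiliary trigonometric interpolation identity. -/
lemma keyLemma (u s A B : ℂ) (h : Complex.sin (u / 2) ≠ 0) :
    Complex.exp (-Complex.I * s * u / 2) * A - Complex.exp (Complex.I * s * u / 2) * B =
      Complex.sin ((1 - s) * u / 2) / Complex.sin (u / 2) * (A - B) +
        Complex.sin (s * u / 2) / Complex.sin (u / 2) *
          (Complex.exp (-Complex.I * u / 2) * A - Complex.exp (Complex.I * u / 2) * B) := by
  rw [div_mul_eq_mul_div, div_mul_eq_mul_div, ← add_div, eq_div_iff h]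
  have ea : Complex.exp (Complex.I * u / 2) ≠ 0 := Complex.exp_ne_zero _
  have eb : Complex.exp (Complex.I * s * u / 2) ≠ 0 := Complex.exp_ne_zero _
  have h1 : Complex.exp (-Complex.I * s * u / 2) = (Complex.exp (Complex.I * s * u / 2))⁻¹ := by
    rw [show -Complex.I * s * u / 2 = -(Complex.I * s * u / 2) by ring, Complex.exp_neg]
  have h2 : Complex.exp (-Complex.I * u / 2) = (Complex.exp (Complex.I * u / 2))⁻¹ := by
    rw [show -Complex.I * u / 2 = -(Complex.I * u / 2) by ring, Complex.exp_neg]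
  have h3 : Complex.sin (u / 2) =
      ((Complex.exp (Complex.I * u / 2))⁻¹ - Complex.exp (Complex.I * u / 2)) * Complex.I / 2 := by
    rw [Complex.sin, show -(u / 2) * Complex.I = -(Complex.I * u / 2) by ring,
      show u / 2 * Complex.I = Complex.I * u / 2 by ring, Complex.exp_neg]
  have h4 : Complex.sin ((1 - s) * u / 2) =
      ((Complex.exp (Complex.I * u / 2))⁻¹ * Complex.exp (Complex.I * s * u / 2)
        - Complex.exp (Complex.I * u / 2) * (Complex.exp (Complex.I * s * u / 2))⁻¹) *
        Complex.I / 2 := by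
    rw [Complex.sin,
      show -((1 - s) * u / 2) * Complex.I = Complex.I * s * u / 2 - Complex.I * u / 2 by ring,
      show (1 - s) * u / 2 * Complex.I = Complex.I * u / 2 - Complex.I * s * u / 2 by ring,
      Complex.exp_sub, Complex.exp_sub]
    field_simp
  have h5 : Complex.sin (s * u / 2) =
      ((Complex.exp (Complex.I * s * u / 2))⁻¹ - Complex.exp (Complex.I * s * u / 2)) *
        Complex.I / 2 := by
    rw [Complex.sin, show -(s * u / 2) * Complex.I = -(Complex.I * s * u / 2) by ring,
      show s * u / 2 * Complex.I = Complex.I * s * u / 2 by ring, Complex.exp_neg]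
  rw [h1, h2, h3, h4, h5]
  field_simp
  ring

/-- Corollary 7.3: the interpolation formula for the canonical-system kernels
associated to orthogonal polynomials on the unit circle. -/
theorem statement12
    (ν : Measure ℂ) (hprob : IsProbabilityMeasure ν) (hcirc : SupportedOnCircle ν)
    (hsupp : HasInfiniteSupportC ν)
    (φ : ℕ → Polynomial ℂ) (horth : IsOrthonormalPolysUC ν φ) :
    ∀ (n : ℕ) (s : ℝ), s ∈ Set.Icc (0 : ℝ) 1 →
      ∀ z w : ℂ, Complex.sin ((z - conj w) / 2) ≠ 0 →
        opucK φ n s z w =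
          Complex.sin ((1 - (s : ℂ)) * (z - conj w) / 2) / Complex.sin ((z - conj w) / 2) *
              opucK φ n 0 z w +
            Complex.sin ((s : ℂ) * (z - conj w) / 2) / Complex.sin ((z - conj w) / 2) *
              opucK φ n 1 z w := by
  intro n s _ z w hsin
  have hzw : z ≠ conj w := by
    intro h
    apply hsin
    rw [h, sub_self, zero_div, Complex.sin_zero]
  have key := keyLemma (z - conj w) (s : ℂ)
      ((polyStar (φ n)).eval (Complex.exp (Complex.I * z)) *
        conj ((polyStar (φ n)).eval (Complex.exp (Complex.I * w))))
      ((φ n).eval (Complex.exp (Complex.I * z)) *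
        conj ((φ n).eval (Complex.exp (Complex.I * w)))) hsin
  simp only [opucK, if_neg hzw, opucNum, Complex.ofReal_zero, Complex.ofReal_one,
    mul_zero, zero_mul, zero_div, Complex.exp_zero, mul_one, one_mul]
  linear_combination (Complex.exp (-Complex.I * (n : ℂ) * (z - conj w) / 2) /
      (2 * Complex.I * (z - conj w))) * key

end
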